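/- Let f(μ) = exp(−μ(v)) and g(μ) = exp(−μ(w)) for bounded measurable nonnegative functions v, w on Y each vanishing outside a set of finite λ-measure, and let η be a Poisson process with intensity λ. Then E[f(η)g(η)] = E[f(η)]·E[g(η)] + Σ_{n=1}^∞ (1/n!) ⟨T_n f, T_n g⟩_{L^2(λ^n)}, i.e. the Fock space covariance identity holds for exponential functionals. -/

import Mathlib

open MeasureTheory
open scoped NNReal ENNReal

variable {Ω Y : Type*} [MeasurableSpace Ω] [MeasurableSpace Y]

/-- The difference operator `D_y f (μ) = f(μ + δ_y) - f(μ)`. -/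
noncomputable def diffOp (y : Y) (f : Measure Y → ℝ) (μ : Measure Y) : ℝ :=
  f (μ + Measure.dirac y) - f μ

/-- The iterated difference operator `D^n_{y_1,…,y_n} f = D_{y_1}(D^{n-1}_{y_2,…,y_n} f)`. -/
noncomputable def iterDiff : (n : ℕ) → (Fin n → Y) → (Measure Y → ℝ) → Measure Y → ℝ
  | 0, _, f => f
  | n + 1, y, f => diffOp (y 0) (iterDiff n (Fin.tail y) f)

/-- `t ↦ e^{-t}` on `[0,∞]`, with `e^{-∞} = 0`. -/
noncomputable def expNeg (t : ℝ≥0∞) : ℝ≥0∞ :=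
  if t = ⊤ then 0 else ENNReal.ofReal (Real.exp (-t.toReal))

/-- `η` is a Poisson process on `Y` with intensity measure `lam`, under the probability
measure `P`, characterized by its Laplace functional
`E[exp(-η(v))] = exp(-λ(1 - e^{-v}))` for all measurable `v : Y → [0,∞]`. -/
def IsPoissonPP (P : Measure Ω) (η : Ω → Measure Y) (lam : Measure Y) : Prop :=
  Measurable η ∧
    ∀ v : Y → ℝ≥0∞, Measurable v →
      ∫⁻ ω, expNeg (∫⁻ x, v x ∂(η ω)) ∂P = expNeg (∫⁻ x, 1 - expNeg (v x) ∂lam)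

/-- The exponential functional `μ ↦ exp(-μ(v))`, with value `0` when `μ(v) = ∞`. -/
noncomputable def expFunctional (v : Y → ℝ≥0) (μ : Measure Y) : ℝ :=
  if ∫⁻ x, (v x : ℝ≥0∞) ∂μ = ⊤ then 0
  else Real.exp (-(∫⁻ x, (v x : ℝ≥0∞) ∂μ).toReal)

lemma expFunctional_eq_toReal_expNeg (v : Y → ℝ≥0) (μ : Measure Y) :
    expFunctional v μ = (expNeg (∫⁻ x, (v x : ℝ≥0∞) ∂μ)).toReal := by
  unfold expFunctional expNeg; split
  · simp
  · rw [ENNReal.toReal_ofReal (Real.exp_pos _).le]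

lemma expNeg_le_one (t : ℝ≥0∞) : expNeg t ≤ 1 := by
  unfold expNeg; split
  · exact zero_le_one
  · calc ENNReal.ofReal (Real.exp (-t.toReal)) ≤ ENNReal.ofReal 1 :=
        ENNReal.ofReal_le_ofReal (Real.exp_le_one_iff.2 (neg_nonpos.2 ENNReal.toReal_nonneg))
    _ = 1 := ENNReal.ofReal_one

lemma expNeg_toReal (t : ℝ≥0∞) (h : t ≠ ⊤) :
    (expNeg t).toReal = Real.exp (-t.toReal) := by
  unfold expNeg
  rw [if_neg h, ENNReal.toReal_ofReal (Real.exp_pos _).le]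

lemma one_sub_expNeg_coe (a : ℝ≥0) :
    1 - expNeg (a : ℝ≥0∞) = ENNReal.ofReal (1 - Real.exp (-(a : ℝ))) := by
  unfold expNeg
  rw [if_neg ENNReal.coe_ne_top, ENNReal.coe_toReal,
    ENNReal.ofReal_sub _ (Real.exp_pos _).le, ENNReal.ofReal_one]

lemma expFunctional_add_dirac (v : Y → ℝ≥0) (hv : Measurable v) (μ : Measure Y) (y : Y) :
    expFunctional v (μ + Measure.dirac y) =
      Real.exp (-(v y : ℝ)) * expFunctional v μ := by
  have hvm : Measurable fun x => (v x : ℝ≥0∞) := measurable_coe_nnreal_ennreal.comp hv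
  have h : ∫⁻ x, (v x : ℝ≥0∞) ∂(μ + Measure.dirac y)
      = (∫⁻ x, (v x : ℝ≥0∞) ∂μ) + v y := by
    rw [lintegral_add_measure, lintegral_dirac' _ hvm]
  unfold expFunctional
  rw [h]
  by_cases htop : ∫⁻ x, (v x : ℝ≥0∞) ∂μ = ⊤
  · simp [htop]
  · have hne : (∫⁻ x, (v x : ℝ≥0∞) ∂μ) + (v y : ℝ≥0∞) ≠ ⊤ :=
      ENNReal.add_ne_top.2 ⟨htop, ENNReal.coe_ne_top⟩
    rw [if_neg hne, if_neg htop, ENNReal.toReal_add htop ENNReal.coe_ne_top,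
      ENNReal.coe_toReal, neg_add, Real.exp_add, mul_comm]

lemma iterDiff_expFunctional (v : Y → ℝ≥0) (hv : Measurable v) (n : ℕ) (y : Fin n → Y)
    (μ : Measure Y) :
    iterDiff n y (expFunctional v) μ =
      (∏ i, (Real.exp (-(v (y i) : ℝ)) - 1)) * expFunctional v μ := by
  induction n generalizing μ with
  | zero => simp [iterDiff]
  | succ n ih =>
      show diffOp (y 0) (iterDiff n (Fin.tail y) (expFunctional v)) μ = _
      have h : iterDiff n (Fin.tail y) (expFunctional v) = fun μ =>
          (∏ i, (Real.exp (-(v (Fin.tail y i) : ℝ)) - 1)) * expFunctional v μ := by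
        funext μ'; exact ih (Fin.tail y) μ'
      rw [h]
      simp only [diffOp]
      rw [expFunctional_add_dirac v hv μ (y 0), Fin.prod_univ_succ]
      simp only [Fin.tail]
      ring

lemma expFunctional_mul (v w : Y → ℝ≥0) (hv : Measurable v) (hw : Measurable w)
    (μ : Measure Y) :
    expFunctional v μ * expFunctional w μ = expFunctional (v + w) μ := by
  have hvm : Measurable fun x => (v x : ℝ≥0∞) := measurable_coe_nnreal_ennreal.comp hv
  have hsum : ∫⁻ x, (((v + w) x : ℝ≥0) : ℝ≥0∞) ∂μ
      = (∫⁻ x, (v x : ℝ≥0∞) ∂μ) + ∫⁻ x, (w x : ℝ≥0∞) ∂μ := by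
    simp_rw [Pi.add_apply, ENNReal.coe_add]
    rw [lintegral_add_left hvm]
  unfold expFunctional
  rw [hsum]
  by_cases hv0 : ∫⁻ x, (v x : ℝ≥0∞) ∂μ = ⊤
  · simp [hv0]
  by_cases hw0 : ∫⁻ x, (w x : ℝ≥0∞) ∂μ = ⊤
  · simp [hw0]
  rw [if_neg hv0, if_neg hw0, if_neg (ENNReal.add_ne_top.2 ⟨hv0, hw0⟩),
    ENNReal.toReal_add hv0 hw0, neg_add, Real.exp_add]

/-- Bounded, finite-support real functions are integrable. -/
lemma integrable_of_bound_support (lam : Measure Y) (f : Y → ℝ) (hf : Measurable f)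
    (B : Set Y) (hB : MeasurableSet B) (hBfin : lam B < ⊤)
    (hbnd : ∀ x, |f x| ≤ 1) (hsupp : ∀ x ∉ B, f x = 0) : Integrable f lam := by
  have hg : Integrable (B.indicator (fun _ => (1:ℝ))) lam := by
    rw [integrable_indicator_iff hB]
    exact integrableOn_const hBfin.ne
  refine hg.mono' hf.aestronglyMeasurable (Filter.Eventually.of_forall fun x => ?_)
  by_cases hx : x ∈ B
  · simpa [Set.indicator_of_mem hx] using hbnd x
  · simp [hsupp x hx, Set.indicator_of_notMem hx]

lemma integral_expFunctional (P : Measure Ω) [IsProbabilityMeasure P] (lam : Measure Y)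
    (η : Ω → Measure Y) (hη : IsPoissonPP P η lam) (v : Y → ℝ≥0) (hv : Measurable v)
    (B : Set Y) (hB : MeasurableSet B) (hBfin : lam B < ⊤) (hsupp : ∀ x ∉ B, v x = 0) :
    ∫ ω, expFunctional v (η ω) ∂P =
      Real.exp (-(∫ x, (1 - Real.exp (-(v x : ℝ))) ∂lam)) := by
  have hvm : Measurable fun x => (v x : ℝ≥0∞) := measurable_coe_nnreal_ennreal.comp hv
  have hLm : Measurable fun ω => expNeg (∫⁻ x, (v x : ℝ≥0∞) ∂(η ω)) := by
    have h1 : Measurable fun μ : Measure Y => ∫⁻ x, (v x : ℝ≥0∞) ∂μ :=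
      Measure.measurable_lintegral hvm
    have hexp : Measurable expNeg := by
      unfold expNeg
      apply Measurable.ite (measurableSet_singleton ⊤) measurable_const
      exact ENNReal.measurable_ofReal.comp
        (Real.measurable_exp.comp (measurable_neg.comp ENNReal.measurable_toReal))
    exact hexp.comp (h1.comp hη.1)
  have hfin : ∫⁻ x, 1 - expNeg ((v x : ℝ≥0∞)) ∂lam ≠ ⊤ := by
    have hle : ∀ x, 1 - expNeg ((v x : ℝ≥0∞)) ≤ B.indicator (1 : Y → ℝ≥0∞) x := by
      intro x
      by_cases hx : x ∈ B
      · simpa [Set.indicator_of_mem hx] using tsub_le_self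
      · have hvx : v x = 0 := hsupp x hx
        simp [Set.indicator_of_notMem hx, hvx, expNeg]
    have hlt : ∫⁻ x, 1 - expNeg ((v x : ℝ≥0∞)) ∂lam < ⊤ :=
      calc ∫⁻ x, 1 - expNeg ((v x : ℝ≥0∞)) ∂lam
          ≤ ∫⁻ x, B.indicator (1 : Y → ℝ≥0∞) x ∂lam := lintegral_mono hle
        _ = lam B := lintegral_indicator_one hB
        _ < ⊤ := hBfin
    exact hlt.ne
  have key := hη.2 (fun x => (v x : ℝ≥0∞)) hvm
  calc ∫ ω, expFunctional v (η ω) ∂P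
      = ∫ ω, (expNeg (∫⁻ x, (v x : ℝ≥0∞) ∂(η ω))).toReal ∂P := by
        simp_rw [expFunctional_eq_toReal_expNeg]
    _ = (∫⁻ ω, expNeg (∫⁻ x, (v x : ℝ≥0∞) ∂(η ω)) ∂P).toReal := by
        apply integral_toReal hLm.aemeasurable
        exact Filter.Eventually.of_forall fun ω =>
          lt_of_le_of_lt (expNeg_le_one _) ENNReal.one_lt_top
    _ = (expNeg (∫⁻ x, 1 - expNeg ((v x : ℝ≥0∞)) ∂lam)).toReal := by rw [key]
    _ = Real.exp (-(∫⁻ x, 1 - expNeg ((v x : ℝ≥0∞)) ∂lam).toReal) :=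
        expNeg_toReal _ hfin
    _ = Real.exp (-(∫ x, (1 - Real.exp (-(v x : ℝ))) ∂lam)) := by
        congr 1
        rw [integral_eq_lintegral_of_nonneg_ae]
        · simp_rw [one_sub_expNeg_coe]
        · exact Filter.Eventually.of_forall fun x => by
            simp [Real.exp_le_one_iff.2 (neg_nonpos.2 (v x).coe_nonneg)]
        · exact (measurable_const.sub
            (Real.measurable_exp.comp (measurable_neg.comp
              hv.coe_nnreal_real))).aestronglyMeasurable


/-- Fock space covariance identity for exponential Poisson functionals:
`E[f(η)g(η)] = E[f(η)]E[g(η)] + ∑_{n≥1} (1/n!) ⟨T_n f, T_n g⟩_{L²(λⁿ)}`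
for `f(μ) = exp(-μ(v))` and `g(μ) = exp(-μ(w))`. -/
theorem fock_covariance_exponential (P : Measure Ω) [IsProbabilityMeasure P]
    (lam : Measure Y) [SigmaFinite lam] (η : Ω → Measure Y) (hη : IsPoissonPP P η lam)
    (v w : Y → ℝ≥0) (hv : Measurable v) (hw : Measurable w)
    (hvbdd : ∃ C : ℝ≥0, ∀ x, v x ≤ C) (hwbdd : ∃ C : ℝ≥0, ∀ x, w x ≤ C)
    (hvsupp : ∃ B : Set Y, MeasurableSet B ∧ lam B < ⊤ ∧ ∀ x ∉ B, v x = 0)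
    (hwsupp : ∃ B : Set Y, MeasurableSet B ∧ lam B < ⊤ ∧ ∀ x ∉ B, w x = 0) :
    ∫ ω, expFunctional v (η ω) * expFunctional w (η ω) ∂P =
      (∫ ω, expFunctional v (η ω) ∂P) * (∫ ω, expFunctional w (η ω) ∂P) +
        ∑' n : ℕ, (1 / ((n + 1).factorial : ℝ)) *
          ∫ y : Fin (n + 1) → Y,
            (∫ ω, iterDiff (n + 1) y (expFunctional v) (η ω) ∂P) *
              (∫ ω, iterDiff (n + 1) y (expFunctional w) (η ω) ∂P)
            ∂(Measure.pi fun _ : Fin (n + 1) => lam) := by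
  obtain ⟨Bv, hBv, hBvfin, hvs⟩ := hvsupp
  obtain ⟨Bw, hBw, hBwfin, hws⟩ := hwsupp
  set fv : Y → ℝ := fun x => 1 - Real.exp (-(v x : ℝ)) with hfv
  set fw : Y → ℝ := fun x => 1 - Real.exp (-(w x : ℝ)) with hfw
  set A : ℝ := ∫ x, fv x ∂lam with hA
  set B : ℝ := ∫ x, fw x ∂lam with hB
  set C : ℝ := ∫ x, fv x * fw x ∂lam with hC
  -- basic properties of fv, fw
  have hfv01 : ∀ x, 0 ≤ fv x ∧ fv x ≤ 1 := fun x =>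
    ⟨by simp [hfv, Real.exp_le_one_iff.2 (neg_nonpos.2 (v x).coe_nonneg)],
     by simp [hfv, (Real.exp_pos _).le]⟩
  have hfw01 : ∀ x, 0 ≤ fw x ∧ fw x ≤ 1 := fun x =>
    ⟨by simp [hfw, Real.exp_le_one_iff.2 (neg_nonpos.2 (w x).coe_nonneg)],
     by simp [hfw, (Real.exp_pos _).le]⟩
  have hfvm : Measurable fv := measurable_const.sub
    (Real.measurable_exp.comp (measurable_neg.comp hv.coe_nnreal_real))
  have hfwm : Measurable fw := measurable_const.sub
    (Real.measurable_exp.comp (measurable_neg.comp hw.coe_nnreal_real))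
  have hfvsupp : ∀ x ∉ Bv, fv x = 0 := fun x hx => by simp [hfv, hvs x hx]
  have hfwsupp : ∀ x ∉ Bw, fw x = 0 := fun x hx => by simp [hfw, hws x hx]
  have Iv : Integrable fv lam :=
    integrable_of_bound_support lam fv hfvm Bv hBv hBvfin
      (fun x => abs_le.2 ⟨by linarith [(hfv01 x).1], (hfv01 x).2⟩) hfvsupp
  have Iw : Integrable fw lam :=
    integrable_of_bound_support lam fw hfwm Bw hBw hBwfin
      (fun x => abs_le.2 ⟨by linarith [(hfw01 x).1], (hfw01 x).2⟩) hfwsupp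
  have Ivw : Integrable (fun x => fv x * fw x) lam :=
    integrable_of_bound_support lam _ (hfvm.mul hfwm) Bv hBv hBvfin
      (fun x => by
        rw [abs_mul]
        calc |fv x| * |fw x| ≤ 1 * 1 := by
              gcongr <;> rw [abs_le] <;>
                exact ⟨by linarith [(hfv01 x).1, (hfw01 x).1],
                  by first | exact (hfv01 x).2 | exact (hfw01 x).2⟩
          _ = 1 := one_mul 1)
      (fun x hx => by rw [hfvsupp x hx, zero_mul])
  -- expectations
  have hEf : ∫ ω, expFunctional v (η ω) ∂P = Real.exp (-A) :=
    integral_expFunctional P lam η hη v hv Bv hBv hBvfin hvs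
  have hEg : ∫ ω, expFunctional w (η ω) ∂P = Real.exp (-B) :=
    integral_expFunctional P lam η hη w hw Bw hBw hBwfin hws
  -- the product expectation
  have hEfg : ∫ ω, expFunctional v (η ω) * expFunctional w (η ω) ∂P
      = Real.exp (-(A + B - C)) := by
    have h1 : ∀ ω, expFunctional v (η ω) * expFunctional w (η ω)
        = expFunctional (v + w) (η ω) := fun ω => expFunctional_mul v w hv hw (η ω)
    simp_rw [h1]
    have h2 := integral_expFunctional P lam η hη (v + w) (hv.add hw) (Bv ∪ Bw)
      (hBv.union hBw)
      (lt_of_le_of_lt (measure_union_le Bv Bw) (ENNReal.add_lt_top.2 ⟨hBvfin, hBwfin⟩))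
      (fun x hx => by
        have hxv : x ∉ Bv := fun h => hx (Set.mem_union_left _ h)
        have hxw : x ∉ Bw := fun h => hx (Set.mem_union_right _ h)
        simp [hvs x hxv, hws x hxw])
    rw [h2]
    congr 1
    have h3 : (fun x => 1 - Real.exp (-(((v + w) x : ℝ≥0) : ℝ)))
        = fun x => fv x + fw x - fv x * fw x := by
      funext x
      have : (((v + w) x : ℝ≥0) : ℝ) = (v x : ℝ) + (w x : ℝ) := by
        simp [NNReal.coe_add]
      rw [this, neg_add, Real.exp_add]
      simp only [hfv, hfw]
      ring
    have Ivfw : Integrable (fun x => fv x + fw x) lam := Iv.add Iw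
    rw [h3, integral_sub Ivfw Ivw, integral_add Iv Iw]
  -- per-n term
  have hterm : ∀ n : ℕ,
      ∫ y : Fin (n + 1) → Y,
          (∫ ω, iterDiff (n + 1) y (expFunctional v) (η ω) ∂P) *
            (∫ ω, iterDiff (n + 1) y (expFunctional w) (η ω) ∂P)
          ∂(Measure.pi fun _ : Fin (n + 1) => lam)
        = (Real.exp (-A) * Real.exp (-B)) * C ^ (n + 1) := by
    intro n
    have hint : ∀ y : Fin (n + 1) → Y,
        (∫ ω, iterDiff (n + 1) y (expFunctional v) (η ω) ∂P) *
          (∫ ω, iterDiff (n + 1) y (expFunctional w) (η ω) ∂P)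
        = (Real.exp (-A) * Real.exp (-B)) * ∏ i, (fv (y i) * fw (y i)) := by
      intro y
      have h1 : ∫ ω, iterDiff (n + 1) y (expFunctional v) (η ω) ∂P
          = (∏ i, (Real.exp (-(v (y i) : ℝ)) - 1)) * Real.exp (-A) := by
        simp_rw [iterDiff_expFunctional v hv (n + 1) y]
        rw [integral_const_mul _ _, hEf]
      have h2 : ∫ ω, iterDiff (n + 1) y (expFunctional w) (η ω) ∂P
          = (∏ i, (Real.exp (-(w (y i) : ℝ)) - 1)) * Real.exp (-B) := by
        simp_rw [iterDiff_expFunctional w hw (n + 1) y]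
        rw [integral_const_mul _ _, hEg]
      rw [h1, h2]
      rw [show (∏ i, (fv (y i) * fw (y i)))
          = (∏ i, (Real.exp (-(v (y i) : ℝ)) - 1)) *
            ∏ i, (Real.exp (-(w (y i) : ℝ)) - 1) by
        rw [← Finset.prod_mul_distrib]
        congr 1; funext i; simp only [hfv, hfw]; ring]
      ring
    simp_rw [hint]
    rw [integral_const_mul _ _]
    congr 1
    -- Fubini for the product
    letI : MeasureSpace Y := ⟨lam⟩
    haveI : SigmaFinite (volume : Measure Y) := ‹SigmaFinite lam›
    have := MeasureTheory.integral_fintype_prod_eq_pow (ι := Fin (n + 1))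
      (fun x => fv x * fw x) (μ := lam)
    simpa [volume_pi, Fintype.card_fin, hC] using this
  simp_rw [hterm]
  -- sum the series
  have hsum : Summable (fun n : ℕ => C ^ n / n.factorial) :=
    Real.summable_pow_div_factorial C
  have hexpC : ∑' n : ℕ, C ^ n / n.factorial = Real.exp C := by
    rw [Real.exp_eq_exp_ℝ, NormedSpace.exp_eq_tsum_div]
  have hshift : ∑' n : ℕ, C ^ (n + 1) / (n + 1).factorial = Real.exp C - 1 := by
    have h0 := hsum.tsum_eq_zero_add
    rw [hexpC] at h0
    simp only [pow_zero, Nat.factorial_zero, Nat.cast_one, div_one] at h0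
    linarith
  have hre : ∀ n : ℕ, (1 / ((n + 1).factorial : ℝ)) *
      ((Real.exp (-A) * Real.exp (-B)) * C ^ (n + 1))
      = (Real.exp (-A) * Real.exp (-B)) * (C ^ (n + 1) / (n + 1).factorial) := by
    intro n; ring
  simp_rw [hre]
  rw [tsum_mul_left, hshift, hEf, hEg, hEfg]
  rw [show -(A + B - C) = -A + -B + C by ring, Real.exp_add, Real.exp_add]
  ring
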